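/- For any sequence (y_k) of best approximation vectors associated to an n×m real matrix A (with rk_ℤ(Aℤ^m + ℤ^n) = m+n), the norms Y_k = |y_k| satisfy Y_{i+3^{m+n}} ≥ 2 Y_{i+1} for all i ≥ 1. -/

import Mathlib

/-!
Suppose `Y_{i+3^{m+n}} < 2 Y_{i+1}`. Attach to an integer vector `y` the residue modulo 3 of the
pair `(y, p)`, where `p` is the integer vector nearest to `ᵗA y`. If two vectors `u ≠ v` share
a residue, `w = (u - v) / 3` is a nonzero integer vector with `|w| ≤ (|u| + |v|) / 3` and
`M(w) ≤ (M(u) + M(v)) / 3`. For `u = y_k` and `v` either `0` or a later `y_l` with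
`i < k < l ≤ i + 3^{m+n}`, this gives `|w| < Y_{k+1}` and `M(w) ≤ 2 M(y_k) / 3 < M(y_k)`,
against the minimality of `M(y_k)`. So the `3^{m+n}` vectors `y_{i+1}, …, y_{i+3^{m+n}}` would
have pairwise distinct nonzero residues, of which there are only `3^{m+n} - 1`.
-/

open Filter

/-- Distance from a real number to the nearest integer. -/
noncomputable def nint (x : ℝ) : ℝ := |x - round x|

/-- Sup norm of an integer vector, as a real number. -/
noncomputable def supNormZ {k : ℕ} (y : Fin k → ℤ) : ℝ := ⨆ i, |(y i : ℝ)|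

/-- `M(y) = ‖ᵗA y‖`: sup-norm distance of `ᵗA y` to `ℤ^m`. -/
noncomputable def Mlin {n m : ℕ} (A : Matrix (Fin n) (Fin m) ℝ) (y : Fin n → ℤ) : ℝ :=
  ⨆ j, nint (∑ i, A i j * (y i : ℝ))

open Finset

section Approximation

variable {n m : ℕ}

noncomputable def roundVec (A : Matrix (Fin n) (Fin m) ℝ) (y : Fin n → ℤ) : Fin m → ℤ :=
  fun j => round (∑ i, A i j * (y i : ℝ))

noncomputable def residue (q : ℕ) (A : Matrix (Fin n) (Fin m) ℝ) (y : Fin n → ℤ) :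
    (Fin n → ZMod q) × (Fin m → ZMod q) :=
  (fun i => (y i : ZMod q), fun j => (roundVec A y j : ZMod q))

lemma supNormZ_zero {k : ℕ} : supNormZ (0 : Fin k → ℤ) = 0 := by
  simp [supNormZ]

lemma supNormZ_nonneg {k : ℕ} (z : Fin k → ℤ) : 0 ≤ supNormZ z :=
  Real.iSup_nonneg fun _ => abs_nonneg _

lemma abs_le_supNormZ {k : ℕ} (z : Fin k → ℤ) (i : Fin k) : |(z i : ℝ)| ≤ supNormZ z :=
  le_ciSup (f := fun i => |(z i : ℝ)|) (Set.finite_range _).bddAbove i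

lemma supNormZ_le {k : ℕ} {z : Fin k → ℤ} {C : ℝ} (hC : 0 ≤ C) (h : ∀ i, |(z i : ℝ)| ≤ C) :
    supNormZ z ≤ C :=
  Real.iSup_le h hC

lemma Mlin_zero (A : Matrix (Fin n) (Fin m) ℝ) : Mlin A 0 = 0 := by
  simp [Mlin, nint]

lemma Mlin_nonneg (A : Matrix (Fin n) (Fin m) ℝ) (z : Fin n → ℤ) : 0 ≤ Mlin A z :=
  Real.iSup_nonneg fun _ => abs_nonneg _

lemma abs_sub_roundVec_le_Mlin (A : Matrix (Fin n) (Fin m) ℝ) (z : Fin n → ℤ) (j : Fin m) :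
    |∑ i, A i j * (z i : ℝ) - roundVec A z j| ≤ Mlin A z :=
  le_ciSup (f := fun j => nint (∑ i, A i j * (z i : ℝ))) (Set.finite_range _).bddAbove j

lemma Mlin_le_of_abs_sub_le {A : Matrix (Fin n) (Fin m) ℝ} {z : Fin n → ℤ} (p : Fin m → ℤ)
    {C : ℝ} (hC : 0 ≤ C) (h : ∀ j, |∑ i, A i j * (z i : ℝ) - p j| ≤ C) : Mlin A z ≤ C :=
  Real.iSup_le (fun j => (round_le _ (p j)).trans (h j)) hC

lemma exists_smul_eq_sub_of_residue_eq {q : ℕ} (hq : 0 < q) {A : Matrix (Fin n) (Fin m) ℝ}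
    {u v : Fin n → ℤ} (h : residue q A u = residue q A v) :
    ∃ w : Fin n → ℤ, u - v = (q : ℤ) • w ∧
      q * supNormZ w ≤ supNormZ u + supNormZ v ∧ q * Mlin A w ≤ Mlin A u + Mlin A v := by
  have hq' : (0 : ℝ) < q := by exact_mod_cast hq
  obtain ⟨hy, hp⟩ := Prod.ext_iff.1 h
  have hdy : ∀ i, (q : ℤ) ∣ u i - v i := fun i =>
    (ZMod.intCast_eq_intCast_iff_dvd_sub _ _ _).1 (congrFun hy i).symm
  have hdp : ∀ j, (q : ℤ) ∣ roundVec A u j - roundVec A v j := fun j =>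
    (ZMod.intCast_eq_intCast_iff_dvd_sub _ _ _).1 (congrFun hp j).symm
  choose w hw using hdy
  choose r hr using hdp
  have hwR : ∀ i, (q : ℝ) * w i = u i - v i := fun i => by exact_mod_cast (hw i).symm
  have hrR : ∀ j, (q : ℝ) * r j = roundVec A u j - roundVec A v j := fun j => by
    exact_mod_cast (hr j).symm
  refine ⟨w, funext hw, ?_, ?_⟩
  · rw [← le_div_iff₀' hq']
    have hY := add_nonneg (supNormZ_nonneg u) (supNormZ_nonneg v)
    refine supNormZ_le (by positivity) fun i => (le_div_iff₀' hq').2 ?_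
    calc (q : ℝ) * |(w i : ℝ)| = |(u i : ℝ) - v i| := by rw [← hwR, abs_mul, abs_of_pos hq']
      _ ≤ |(u i : ℝ)| + |(v i : ℝ)| := abs_sub _ _
      _ ≤ supNormZ u + supNormZ v := add_le_add (abs_le_supNormZ u i) (abs_le_supNormZ v i)
  · rw [← le_div_iff₀' hq']
    have hM := add_nonneg (Mlin_nonneg A u) (Mlin_nonneg A v)
    refine Mlin_le_of_abs_sub_le r (by positivity) fun j => (le_div_iff₀' hq').2 ?_
    have hsum : (q : ℝ) * (∑ i, A i j * (w i : ℝ) - r j) =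
        (∑ i, A i j * (u i : ℝ) - roundVec A u j) - (∑ i, A i j * (v i : ℝ) - roundVec A v j) := by
      simp only [mul_sub, hrR, mul_sum, mul_left_comm (q : ℝ), hwR, mul_sub,
        sum_sub_distrib]
      ring
    calc (q : ℝ) * |∑ i, A i j * (w i : ℝ) - r j|
        = |(∑ i, A i j * (u i : ℝ) - roundVec A u j) -
            (∑ i, A i j * (v i : ℝ) - roundVec A v j)| := by
          rw [← hsum, abs_mul, abs_of_pos hq']
      _ ≤ Mlin A u + Mlin A v :=
          (abs_sub _ _).trans
            (add_le_add (abs_sub_roundVec_le_Mlin A u j) (abs_sub_roundVec_le_Mlin A v j))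

lemma residue_ne_of_forall_Mlin_le {q : ℕ} (hq : 2 < q) {A : Matrix (Fin n) (Fin m) ℝ}
    {u v : Fin n → ℤ} {Y : ℝ}
    (hbest : ∀ z : Fin n → ℤ, z ≠ 0 → supNormZ z < Y → Mlin A u ≤ Mlin A z)
    (hu : 0 < Mlin A u) (hvu : Mlin A v ≤ Mlin A u) (hY : supNormZ u + supNormZ v < q * Y)
    (huv : u ≠ v) : residue q A u ≠ residue q A v := by
  intro h
  obtain ⟨w, hw, hwY, hwM⟩ := exists_smul_eq_sub_of_residue_eq (by omega) h
  have hq' : (2 : ℝ) < q := by exact_mod_cast hq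
  have hw0 : w ≠ 0 := by
    rintro rfl
    exact huv (sub_eq_zero.1 (by simpa using hw))
  have hMw := hbest w hw0 (lt_of_mul_lt_mul_left (hwY.trans_lt hY) (by positivity))
  nlinarith

end Approximation

section BestApproximation

variable {n m : ℕ} {A : Matrix (Fin n) (Fin m) ℝ} {y : ℕ → (Fin n → ℤ)}

lemma Mlin_pos_of_strictAntiOn (hManti : StrictAntiOn (fun k => Mlin A (y k)) {k | 1 ≤ k})
    {k : ℕ} (hk : 1 ≤ k) : 0 < Mlin A (y k) :=
  (Mlin_nonneg A _).trans_lt (hManti hk (show 1 ≤ k + 1 by omega) k.lt_succ_self)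

lemma residue_ne_residue_zero (hYmono : StrictMonoOn (fun k => supNormZ (y k)) {k | 1 ≤ k})
    (hManti : StrictAntiOn (fun k => Mlin A (y k)) {k | 1 ≤ k})
    (hbest : ∀ k, 1 ≤ k → ∀ z : Fin n → ℤ, z ≠ 0 → supNormZ z < supNormZ (y (k + 1)) →
      Mlin A (y k) ≤ Mlin A z)
    {k : ℕ} (hk : 1 ≤ k) : residue 3 A (y k) ≠ residue 3 A 0 := by
  have hM := Mlin_pos_of_strictAntiOn hManti hk
  refine residue_ne_of_forall_Mlin_le (by norm_num) (hbest k hk) hM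
    (by simpa [Mlin_zero] using Mlin_nonneg A (y k)) ?_ ?_
  · rw [supNormZ_zero]
    push_cast
    linarith [hYmono hk (show 1 ≤ k + 1 by omega) k.lt_succ_self, supNormZ_nonneg (y k)]
  · rintro hy0
    simp [hy0, Mlin_zero] at hM

lemma injOn_residue_Ioc (hYmono : StrictMonoOn (fun k => supNormZ (y k)) {k | 1 ≤ k})
    (hManti : StrictAntiOn (fun k => Mlin A (y k)) {k | 1 ≤ k})
    (hbest : ∀ k, 1 ≤ k → ∀ z : Fin n → ℤ, z ≠ 0 → supNormZ z < supNormZ (y (k + 1)) →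
      Mlin A (y k) ≤ Mlin A z)
    {i j : ℕ} (hi : 1 ≤ i) (hgap : supNormZ (y j) < 2 * supNormZ (y (i + 1))) :
    Set.InjOn (fun k => residue 3 A (y k)) (Ioc i j) := by
  suffices h : ∀ k ∈ Ioc i j, ∀ l ∈ Ioc i j, k < l → residue 3 A (y k) ≠ residue 3 A (y l) by
    intro k hk l hl heq
    by_contra hkl
    rcases lt_or_gt_of_ne hkl with hlt | hlt
    exacts [h k hk l hl hlt heq, h l hl k hk hlt heq.symm]
  intro k hk l hl hlt
  simp only [mem_Ioc] at hk hl
  have hk1 : 1 ≤ k := by omega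
  have hl1 : 1 ≤ l := by omega
  refine residue_ne_of_forall_Mlin_le (by norm_num) (hbest k hk1)
    (Mlin_pos_of_strictAntiOn hManti hk1) (hManti.antitoneOn hk1 hl1 hlt.le) ?_
    (fun h => (hYmono hk1 hl1 hlt).ne (congrArg supNormZ h))
  have hYl := hYmono.monotoneOn hl1 (show 1 ≤ j by omega) hl.2
  have hYk := hYmono.monotoneOn (show 1 ≤ i + 1 by omega) hk1 (show i + 1 ≤ k by omega)
  have hYsucc := hYmono hk1 (show 1 ≤ k + 1 by omega) k.lt_succ_self
  push_cast
  linarith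

end BestApproximation

theorem stmt18 (n m : ℕ)
    (A : Matrix (Fin n) (Fin m) ℝ)
    -- `(y k)_{k ≥ 1}` is a sequence of best approximation vectors for `ᵗA`, with `Y_1 = 1`
    (y : ℕ → (Fin n → ℤ))
    (hYmono : StrictMonoOn (fun k => supNormZ (y k)) {k | 1 ≤ k})
    (hManti : StrictAntiOn (fun k => Mlin A (y k)) {k | 1 ≤ k})
    (hbest : ∀ k, 1 ≤ k → ∀ z : Fin n → ℤ, z ≠ 0 → supNormZ z < supNormZ (y (k + 1)) →
      Mlin A (y k) ≤ Mlin A z) :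
    ∀ i : ℕ, 1 ≤ i → 2 * supNormZ (y (i + 1)) ≤ supNormZ (y (i + 3 ^ (m + n))) := by
  intro i hi
  by_contra! hgap
  have hmaps : Set.MapsTo (fun k => residue 3 A (y k)) (Ioc i (i + 3 ^ (m + n)))
      (univ.erase (residue 3 A 0)) := fun k hk =>
    mem_erase.2 ⟨residue_ne_residue_zero hYmono hManti hbest (by simp at hk; omega), mem_univ _⟩
  have hcard := card_le_card_of_injOn _ hmaps (injOn_residue_Ioc hYmono hManti hbest hi hgap)
  simp only [Nat.card_Ioc, add_tsub_cancel_left, card_erase_of_mem (mem_univ _), card_univ,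
    Fintype.card_prod, Fintype.card_fun, ZMod.card, Fintype.card_fin, ← pow_add, add_comm n m]
    at hcard
  have := Nat.one_le_pow (m + n) 3 (by norm_num)
  omega
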